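/- Suppose neither A = {A_ij} nor B = {B_ij} is properly reducible in the coupled sense, and X_i (n_i×m_i) satisfy A_ij X_j = X_i B_ij for all i,j ∈ I. Then for each i, either X_i = 0 or X_i is invertible (and then m_i = n_i). -/
import Mathlib


open Matrix

/-- `A` is properly reducible in the coupled sense: there is a coupled-invariant family of
subspaces at least one of which is a nonzero proper subspace. -/
def CoupledProperlyReducible {F : Type*} [Field F] {I : Type*} {n : I → ℕ}
    (A : ∀ i j : I, Matrix (Fin (n i)) (Fin (n j)) F) : Prop :=
  ∃ U : ∀ i : I, Submodule F (Fin (n i) → F),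
    (∃ i, U i ≠ ⊥ ∧ U i ≠ ⊤) ∧
    ∀ i j, (U j).map (A i j).mulVecLin ≤ U i

/-- Coupled Schur's Lemma for proper reducibility: if neither `A` nor `B` is properly
reducible in the coupled sense, then each `X i` is zero or invertible. -/
theorem stmt_5 {F : Type*} [Field F] {I : Type*} {n m : I → ℕ}
    (A : ∀ i j : I, Matrix (Fin (n i)) (Fin (n j)) F)
    (B : ∀ i j : I, Matrix (Fin (m i)) (Fin (m j)) F)
    (hA : ¬ CoupledProperlyReducible A) (hB : ¬ CoupledProperlyReducible B)
    (X : ∀ i : I, Matrix (Fin (n i)) (Fin (m i)) F)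
    (hX : ∀ i j, A i j * X j = X i * B i j) :
    ∀ i, X i = 0 ∨ (Function.Bijective (X i).mulVecLin ∧ m i = n i) := by
  intro i
  have key : ∀ i' j (v : Fin (m j) → F),
      X i' *ᵥ (B i' j *ᵥ v) = A i' j *ᵥ (X j *ᵥ v) := by
    intro i' j v
    rw [Matrix.mulVec_mulVec, Matrix.mulVec_mulVec, hX i' j]
  -- ranges are A-invariant
  have hUinv : ∀ i' j, (LinearMap.range (X j).mulVecLin).map (A i' j).mulVecLin ≤
      LinearMap.range (X i').mulVecLin := by
    intro i' j x hx
    simp only [Submodule.mem_map, LinearMap.mem_range, mulVecLin_apply] at hx ⊢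
    obtain ⟨y, ⟨v, hv⟩, hy⟩ := hx
    exact ⟨B i' j *ᵥ v, by rw [key, hv, hy]⟩
  have hU := fun i' => not_and_or.mp
    (fun h => hA ⟨fun j => LinearMap.range (X j).mulVecLin, ⟨i', h⟩, hUinv⟩)
  -- kernels are B-invariant
  have hKinv : ∀ i' j, (LinearMap.ker (X j).mulVecLin).map (B i' j).mulVecLin ≤
      LinearMap.ker (X i').mulVecLin := by
    intro i' j x hx
    simp only [Submodule.mem_map, LinearMap.mem_ker, mulVecLin_apply] at hx ⊢
    obtain ⟨y, hy, rfl⟩ := hx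
    rw [key, hy, Matrix.mulVec_zero]
  have hK := fun i' => not_and_or.mp
    (fun h => hB ⟨fun j => LinearMap.ker (X j).mulVecLin, ⟨i', h⟩, hKinv⟩)
  have Xzero_of_map_zero : (X i).mulVecLin = 0 → X i = 0 := by
    intro h
    ext a b
    have := congrFun (LinearMap.congr_fun h (Pi.single b 1)) a
    simpa [mulVecLin_apply, Matrix.mulVec_single] using this
  rcases hK i with hk | hk
  · -- ker = ⊥
    push_neg at hk
    rcases hU i with hr | hr
    · -- range = ⊥ : X i = 0
      left
      push_neg at hr
      exact Xzero_of_map_zero (LinearMap.range_eq_bot.mp hr)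
    · -- range = ⊤ : bijective
      push_neg at hr
      right
      have hinj : Function.Injective (X i).mulVecLin := by
        rwa [← LinearMap.ker_eq_bot]
      have hsurj : Function.Surjective (X i).mulVecLin := by
        rwa [← LinearMap.range_eq_top]
      refine ⟨⟨hinj, hsurj⟩, ?_⟩
      have e := LinearEquiv.ofBijective (X i).mulVecLin ⟨hinj, hsurj⟩
      have := e.finrank_eq
      simpa using this
  · -- ker = ⊤ : X i = 0
    left
    push_neg at hk
    exact Xzero_of_map_zero (LinearMap.ker_eq_top.mp hk)
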